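/- Let T = (1/√2) times the 4×4 matrix with rows (1,0,0,1), (0,i,i,0), (0,−1,1,0), (i,0,0,−i). Then T is unitary, and for all A₁, A₂ ∈ SL₂(ℂ), the matrix T(A₁⊗A₂)T* lies in SO₄(ℂ), i.e., it is a complex orthogonal matrix of determinant 1. -/
import Mathlib


open Matrix
open scoped Kronecker

/-- The `4 × 4` Kronecker product of two `2 × 2` matrices, indexed by `Fin 4`. -/
noncomputable def kron4 (A B : Matrix (Fin 2) (Fin 2) ℂ) : Matrix (Fin 4) (Fin 4) ℂ :=
  Matrix.reindex finProdFinEquiv finProdFinEquiv (A ⊗ₖ B)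

/-- The unitary matrix `T` realizing the double cover `SL₂ × SL₂ → SO₄`. -/
noncomputable def Tmat : Matrix (Fin 4) (Fin 4) ℂ :=
  ((Real.sqrt 2 : ℂ))⁻¹ •
    !![1, 0, 0, 1;
       0, Complex.I, Complex.I, 0;
       0, -1, 1, 0;
       Complex.I, 0, 0, -Complex.I]

/-- The raw (unscaled) magic matrix. -/
def Craw : Matrix (Fin 4) (Fin 4) ℂ :=
  !![1, 0, 0, 1;
     0, Complex.I, Complex.I, 0;
     0, -1, 1, 0;
     Complex.I, 0, 0, -Complex.I]

/-- The symplectic-type form `ε ⊗ ε` as an explicit `4 × 4` matrix. -/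
def E4 : Matrix (Fin 4) (Fin 4) ℂ :=
  !![0, 0, 0, 1;
     0, 0, -1, 0;
     0, -1, 0, 0;
     1, 0, 0, 0]

/-- `ε`. -/
def eps : Matrix (Fin 2) (Fin 2) ℂ := !![0, 1; -1, 0]

lemma Tmat_eq : Tmat = ((Real.sqrt 2 : ℂ))⁻¹ • Craw := rfl

lemma hc : ((Real.sqrt 2 : ℂ))⁻¹ * ((Real.sqrt 2 : ℂ))⁻¹ = (2 : ℂ)⁻¹ := by
  rw [← mul_inv, ← Complex.ofReal_mul, Real.mul_self_sqrt (by norm_num)]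
  norm_num

lemma hconj : (starRingEnd ℂ) ((Real.sqrt 2 : ℂ))⁻¹ = ((Real.sqrt 2 : ℂ))⁻¹ := by
  rw [map_inv₀, Complex.conj_ofReal]

lemma kron4_mul (A B C D : Matrix (Fin 2) (Fin 2) ℂ) :
    kron4 A B * kron4 C D = kron4 (A * C) (B * D) := by
  simp only [kron4, reindex_apply, Matrix.submatrix_mul_equiv, Matrix.mul_kronecker_mul]

lemma kron4_transpose (A B : Matrix (Fin 2) (Fin 2) ℂ) :
    (kron4 A B)ᵀ = kron4 Aᵀ Bᵀ := by
  simp only [kron4, reindex_apply, Matrix.transpose_submatrix, Matrix.kroneckerMap_transpose]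

lemma mul_eps (A : Matrix (Fin 2) (Fin 2) ℂ) (hA : A.det = 1) :
    A * eps * Aᵀ = eps := by
  have h := A.det_fin_two
  rw [hA] at h
  ext i j
  fin_cases i <;> fin_cases j <;>
    simp [eps, Matrix.mul_apply, Fin.sum_univ_two] <;>
    first
      | linear_combination h
      | linear_combination -h
      | linear_combination 2 * h
      | linear_combination -2 * h
      | ring

lemma kron4_eps : kron4 eps eps = E4 := by
  have e0 : finProdFinEquiv.symm (0 : Fin 4) = ((0 : Fin 2), (0 : Fin 2)) := by decide
  have e1 : finProdFinEquiv.symm (1 : Fin 4) = ((0 : Fin 2), (1 : Fin 2)) := by decide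
  have e2 : finProdFinEquiv.symm (2 : Fin 4) = ((1 : Fin 2), (0 : Fin 2)) := by decide
  have e3 : finProdFinEquiv.symm (3 : Fin 4) = ((1 : Fin 2), (1 : Fin 2)) := by decide
  ext i j
  fin_cases i <;> fin_cases j <;>
    simp [kron4, E4, eps, Matrix.kroneckerMap_apply, e0, e1, e2, e3,
      Matrix.vecHead, Matrix.vecTail]

lemma kron4_E4 (A B : Matrix (Fin 2) (Fin 2) ℂ) (hA : A.det = 1) (hB : B.det = 1) :
    kron4 A B * E4 * (kron4 A B)ᵀ = E4 := by
  rw [← kron4_eps, kron4_transpose, kron4_mul, kron4_mul, mul_eps A hA, mul_eps B hB]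

lemma Craw_mul_conjT : Craw * Crawᴴ = (2 : ℂ) • (1 : Matrix (Fin 4) (Fin 4) ℂ) := by
  ext i j
  fin_cases i <;> fin_cases j <;>
    simp [Craw, Matrix.mul_apply, Fin.sum_univ_four, Matrix.conjTranspose_apply,
      Matrix.one_apply, Matrix.vecHead, Matrix.vecTail, Complex.ext_iff] <;> norm_num

lemma CrawH_mul : Crawᴴ * Crawᴴᵀ = (2 : ℂ) • E4 := by
  ext i j
  fin_cases i <;> fin_cases j <;>
    simp [Craw, E4, Matrix.mul_apply, Fin.sum_univ_four, Matrix.conjTranspose_apply,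
      Matrix.transpose_apply, Matrix.vecHead, Matrix.vecTail, Complex.ext_iff] <;> norm_num

lemma Craw_E4 : Craw * E4 * Crawᵀ = (2 : ℂ) • (1 : Matrix (Fin 4) (Fin 4) ℂ) := by
  ext i j
  fin_cases i <;> fin_cases j <;>
    simp [Craw, E4, Matrix.mul_apply, Fin.sum_univ_four, Matrix.transpose_apply,
      Matrix.one_apply, Matrix.vecHead, Matrix.vecTail, Complex.ext_iff] <;> norm_num

lemma TmatH : Tmatᴴ = ((Real.sqrt 2 : ℂ))⁻¹ • Crawᴴ := by
  rw [Tmat_eq, Matrix.conjTranspose_smul]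
  congr 1
  exact hconj

lemma Tmat_unitary : Tmat * Tmatᴴ = 1 := by
  rw [TmatH, Tmat_eq, Matrix.smul_mul, Matrix.mul_smul, smul_smul, hc, Craw_mul_conjT,
    smul_smul]
  norm_num

lemma TmatH_mul : Tmatᴴ * Tmatᴴᵀ = E4 := by
  rw [TmatH, Matrix.transpose_smul, Matrix.smul_mul, Matrix.mul_smul, smul_smul, hc, CrawH_mul,
    smul_smul]
  norm_num

lemma Tmat_E4 : Tmat * E4 * Tmatᵀ = 1 := by
  rw [Tmat_eq, Matrix.transpose_smul, Matrix.smul_mul, Matrix.smul_mul, Matrix.mul_smul,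
    smul_smul, hc, Craw_E4, smul_smul]
  norm_num

/-- `T` is unitary, and for all `A₁, A₂ ∈ SL₂(ℂ)`, the matrix `T (A₁ ⊗ A₂) T*` lies in
`SO₄(ℂ)`: it is complex orthogonal with determinant 1. -/
theorem stmt10 :
    Tmat ∈ Matrix.unitaryGroup (Fin 4) ℂ ∧
      ∀ A₁ A₂ : Matrix (Fin 2) (Fin 2) ℂ, A₁.det = 1 → A₂.det = 1 →
        (Tmat * kron4 A₁ A₂ * Tmatᴴ) * (Tmat * kron4 A₁ A₂ * Tmatᴴ)ᵀ = 1 ∧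
          (Tmat * kron4 A₁ A₂ * Tmatᴴ).det = 1 := by
  constructor
  · rw [Matrix.mem_unitaryGroup_iff]
    exact Tmat_unitary
  · intro A₁ A₂ h₁ h₂
    constructor
    · have key : (Tmat * kron4 A₁ A₂ * Tmatᴴ) * (Tmat * kron4 A₁ A₂ * Tmatᴴ)ᵀ =
          Tmat * (kron4 A₁ A₂ * (Tmatᴴ * Tmatᴴᵀ) * (kron4 A₁ A₂)ᵀ) * Tmatᵀ := by
        simp only [Matrix.transpose_mul, Matrix.mul_assoc]
      rw [key, TmatH_mul, kron4_E4 A₁ A₂ h₁ h₂, Tmat_E4]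
    · have hdetT : Tmat.det * Tmatᴴ.det = 1 := by
        rw [← Matrix.det_mul, Tmat_unitary, Matrix.det_one]
      have hdetK : (kron4 A₁ A₂).det = 1 := by
        rw [kron4, Matrix.det_reindex_self, Matrix.det_kronecker, h₁, h₂]
        norm_num
      rw [Matrix.det_mul, Matrix.det_mul, hdetK, mul_one, hdetT]
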